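/- arXiv:1405.3387 — 2 statements merged into one kernel-verified Lean document; each statement's English description precedes it below -/
import Mathlib

section
/- Let w be a weight on ℝ and {p_k} the orthonormal polynomials with respect to w². Let Φ be a linear functional on the space of polynomials of degree < n, and fix n. If ∑_{k=0}^{n-1} Φ(p_k)² > 0, then (∑_{k=0}^{n-1} Φ(p_k)²)^{-1} = inf over polynomials P of degree at most n-1 with Φ(P) ≠ 0 of (1/Φ(P)²) ∫ |P(t) w(t)|² dt. In particular, taking Φ(P) = P^{(j)}(x) for a fixed x ∈ ℝ and 0 ≤ j < n, one has (∑_{k=0}^{n-1} (p_k^{(j)}(x))²)^{-1} = inf_{P ∈ 𝒫_{n-1}, P^{(j)}(x) ≠ 0} (1/(P^{(j)}(x))²) ∫ |P(t) w(t)|² dt. -/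
/-!
Expanding a polynomial of degree `< n` in the orthonormal basis as `P = ∑ cₖ pₖ` turns the
weighted `L²` norm into `∑ cₖ²` and `Φ P` into `∑ cₖ Φ(pₖ)`. By Cauchy–Schwarz,
`Φ(P)² ≤ ∑ cₖ² · ∑ Φ(pₖ)²`, with equality for `cₖ = Φ(pₖ)`, so the infimum is a minimum equal
to `(∑ Φ(pₖ)²)⁻¹`. The derivative case is the functional `P ↦ P⁽ʲ⁾(x)`.
-/

open MeasureTheory Polynomial Finset

namespace Polynomial

theorem exists_sum_smul_eq_of_natDegree_lt {K : Type*} [Field K] {p : ℕ → K[X]}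
    (hdeg : ∀ k, (p k).degree = k) {n : ℕ} {P : K[X]} (hP : P.natDegree < n) :
    ∃ c : ℕ → K, ∑ k ∈ range n, c k • p k = P := by
  let S : Sequence K := ⟨p, hdeg⟩
  have hspan := S.span_degreeLT (m := n) fun i _ => (leadingCoeff_ne_zero.2 (S.ne_zero i)).isUnit
  have hmem : P ∈ degreeLT K n :=
    mem_degreeLT.2 (degree_le_natDegree.trans_lt (by exact_mod_cast hP))
  rw [← hspan, ← coe_range] at hmem
  exact (Submodule.mem_span_image_finset_iff_exists_fun' K).1 hmem

end Polynomial

theorem integral_sq_sum_of_orthonormal {α ι : Type*} [MeasurableSpace α] [DecidableEq ι]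
    {μ : Measure α} {f : ι → α → ℝ} (hint : ∀ k m, Integrable (fun t => f k t * f m t) μ)
    (horth : ∀ k m, ∫ t, f k t * f m t ∂μ = if k = m then 1 else 0)
    (s : Finset ι) (c : ι → ℝ) :
    ∫ t, (∑ k ∈ s, c k * f k t) ^ 2 ∂μ = ∑ k ∈ s, c k ^ 2 := by
  have hexpand : ∀ t, (∑ k ∈ s, c k * f k t) ^ 2
      = ∑ k ∈ s, ∑ m ∈ s, c k * c m * (f k t * f m t) := fun t => by
    rw [sq, sum_mul_sum]
    exact sum_congr rfl fun k _ => sum_congr rfl fun m _ => by ring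
  simp_rw [hexpand]
  rw [integral_finsetSum _ fun k _ => integrable_finsetSum _ fun m _ => (hint k m).const_mul _]
  refine sum_congr rfl fun k hk => ?_
  rw [integral_finsetSum _ fun m _ => (hint k m).const_mul _]
  simp_rw [integral_const_mul, horth, mul_ite, mul_one, mul_zero]
  rw [sum_ite_eq s k, if_pos hk, sq]

theorem inv_sum_sq_le_of_sum_mul_ne_zero {ι : Type*} (s : Finset ι) (a c : ι → ℝ)
    (ha : 0 < ∑ k ∈ s, a k ^ 2) (hc : ∑ k ∈ s, c k * a k ≠ 0) :
    (∑ k ∈ s, a k ^ 2)⁻¹ ≤ 1 / (∑ k ∈ s, c k * a k) ^ 2 * ∑ k ∈ s, c k ^ 2 := by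
  have hcs := sum_mul_sq_le_sq_mul_sq s c a
  rw [one_div, inv_mul_eq_div, le_div_iff₀ (by positivity), inv_mul_le_iff₀ ha]
  linarith

section Christoffel

variable {μ : Measure ℝ} {w : ℝ → ℝ}
  (hint : ∀ P : ℝ[X], Integrable (fun t => (P.eval t) ^ 2 * (w t) ^ 2) μ)
include hint

theorem integrable_eval_mul_eval_mul_sq (P Q : ℝ[X]) :
    Integrable (fun t => P.eval t * Q.eval t * (w t) ^ 2) μ := by
  have hpolar : (fun t => P.eval t * Q.eval t * (w t) ^ 2) = fun t => (2⁻¹ : ℝ) *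
      ((P + Q).eval t ^ 2 * w t ^ 2 - P.eval t ^ 2 * w t ^ 2 - Q.eval t ^ 2 * w t ^ 2) := by
    funext t
    rw [eval_add]
    ring
  rw [hpolar]
  exact (((hint (P + Q)).sub (hint P)).sub (hint Q)).const_mul _

variable {p : ℕ → ℝ[X]}
  (horth : ∀ k m, ∫ t, (p k).eval t * (p m).eval t * (w t) ^ 2 ∂μ = if k = m then 1 else 0)
include horth

theorem integral_sq_weighted_eval_sum_smul (n : ℕ) (c : ℕ → ℝ) :
    ∫ t, ((∑ k ∈ range n, c k • p k).eval t * w t) ^ 2 ∂μ = ∑ k ∈ range n, c k ^ 2 := by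
  have hweighted : ∀ k m, (fun t => (p k).eval t * w t * ((p m).eval t * w t))
      = fun t => (p k).eval t * (p m).eval t * (w t) ^ 2 := fun k m => by
    funext t
    ring
  have hexpansion := integral_sq_sum_of_orthonormal (f := fun k t => (p k).eval t * w t)
    (fun k m => hweighted k m ▸ integrable_eval_mul_eval_mul_sq hint (p k) (p m))
    (fun k m => hweighted k m ▸ horth k m) (range n) c
  simpa only [eval_finsetSum, eval_smul, smul_eq_mul, sum_mul, mul_assoc] using hexpansion

theorem isLeast_christoffel (hdeg : ∀ k, (p k).degree = k) (n : ℕ) (Φ : ℝ[X] →ₗ[ℝ] ℝ)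
    (hΦpos : 0 < ∑ k ∈ range n, Φ (p k) ^ 2) :
    IsLeast {r : ℝ | ∃ P : ℝ[X], P.natDegree < n ∧ Φ P ≠ 0 ∧
        r = 1 / (Φ P) ^ 2 * ∫ t, (P.eval t * w t) ^ 2 ∂μ}
      (∑ k ∈ range n, Φ (p k) ^ 2)⁻¹ := by
  have hΦsum : ∀ c : ℕ → ℝ, Φ (∑ k ∈ range n, c k • p k) = ∑ k ∈ range n, c k * Φ (p k) :=
    fun c => by simp only [map_sum, map_smul, smul_eq_mul]
  constructor
  · set P₀ := ∑ k ∈ range n, Φ (p k) • p k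
    have hΦP₀ : Φ P₀ = ∑ k ∈ range n, Φ (p k) ^ 2 := by simp only [P₀, hΦsum, sq]
    have hΦP₀_ne : Φ P₀ ≠ 0 := hΦP₀ ▸ hΦpos.ne'
    have hP₀ : P₀ ≠ 0 := fun h => hΦP₀_ne (by rw [h, map_zero])
    have hdegP₀ : P₀.natDegree < n := by
      rw [natDegree_lt_iff_degree_lt hP₀, ← mem_degreeLT]
      exact sum_mem fun k hk =>
        Submodule.smul_mem _ _ (mem_degreeLT.2 (by simpa [hdeg] using mem_range.1 hk))
    refine ⟨P₀, hdegP₀, hΦP₀_ne, ?_⟩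
    rw [hΦP₀, integral_sq_weighted_eval_sum_smul hint horth]
    field_simp
  · rintro r ⟨P, hPdeg, hΦP, rfl⟩
    obtain ⟨c, rfl⟩ := exists_sum_smul_eq_of_natDegree_lt hdeg hPdeg
    rw [hΦsum] at hΦP ⊢
    rw [integral_sq_weighted_eval_sum_smul hint horth]
    exact inv_sum_sq_le_of_sum_mul_ne_zero _ _ _ hΦpos hΦP

end Christoffel

theorem christoffel_extremal_linear_functional_general
    (w : ℝ → ℝ)
    (hint : ∀ P : Polynomial ℝ, Integrable (fun t => (P.eval t)^2 * (w t)^2))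
    (p : ℕ → Polynomial ℝ) (hdeg : ∀ k, (p k).natDegree = k)
    (horth : ∀ k m, ∫ t, (p k).eval t * (p m).eval t * (w t)^2
      = if k = m then (1:ℝ) else 0)
    (n : ℕ) (Φ : Polynomial ℝ →ₗ[ℝ] ℝ)
    (hΦpos : 0 < ∑ k ∈ Finset.range n, (Φ (p k))^2) :
    ((∑ k ∈ Finset.range n, (Φ (p k))^2)⁻¹
      = sInf {r : ℝ | ∃ P : Polynomial ℝ, P.natDegree < n ∧ Φ P ≠ 0 ∧
          r = (1 / (Φ P)^2) * ∫ t, (P.eval t * w t)^2}) ∧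
    (∀ (x : ℝ) (j : ℕ), j < n →
      0 < ∑ k ∈ Finset.range n, (((Polynomial.derivative)^[j] (p k)).eval x)^2 →
      (∑ k ∈ Finset.range n, (((Polynomial.derivative)^[j] (p k)).eval x)^2)⁻¹
        = sInf {r : ℝ | ∃ P : Polynomial ℝ, P.natDegree < n ∧
            ((Polynomial.derivative)^[j] P).eval x ≠ 0 ∧
            r = (1 / (((Polynomial.derivative)^[j] P).eval x)^2) *
                ∫ t, (P.eval t * w t)^2}) := by
  have hdeg' : ∀ k, (p k).degree = k := fun k => by
    have hne : p k ≠ 0 := fun h => by simpa [h] using horth k k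
    rw [degree_eq_natDegree hne, hdeg]
  have hextremal := fun Φ hΦpos => (isLeast_christoffel hint horth hdeg' n Φ hΦpos).csInf_eq.symm
  refine ⟨hextremal Φ hΦpos, fun x j _ hpos => ?_⟩
  obtain ⟨Ψ, hΨ⟩ : ∃ Ψ : ℝ[X] →ₗ[ℝ] ℝ, ∀ P, Ψ P = (derivative^[j] P).eval x :=
    ⟨(leval x).comp (derivative ^ j), fun P => by simp [Module.End.pow_apply]⟩
  simp only [← hΨ] at hpos ⊢
  exact hextremal Ψ hpos

/-- extremal property for a linear functional, with the
derivative-functional special case. -/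
theorem christoffel_extremal_linear_functional
    (w : ℝ → ℝ) (hw : ∀ x, 0 < w x)
    (hint : ∀ P : Polynomial ℝ, Integrable (fun t => (P.eval t)^2 * (w t)^2))
    (p : ℕ → Polynomial ℝ) (hdeg : ∀ k, (p k).natDegree = k)
    (horth : ∀ k m, ∫ t, (p k).eval t * (p m).eval t * (w t)^2
      = if k = m then (1:ℝ) else 0)
    (n : ℕ) (Φ : Polynomial ℝ →ₗ[ℝ] ℝ)
    (hΦpos : 0 < ∑ k ∈ Finset.range n, (Φ (p k))^2) :
    ((∑ k ∈ Finset.range n, (Φ (p k))^2)⁻¹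
      = sInf {r : ℝ | ∃ P : Polynomial ℝ, P.natDegree < n ∧ Φ P ≠ 0 ∧
          r = (1 / (Φ P)^2) * ∫ t, (P.eval t * w t)^2}) ∧
    (∀ (x : ℝ) (j : ℕ), j < n →
      0 < ∑ k ∈ Finset.range n, (((Polynomial.derivative)^[j] (p k)).eval x)^2 →
      (∑ k ∈ Finset.range n, (((Polynomial.derivative)^[j] (p k)).eval x)^2)⁻¹
        = sInf {r : ℝ | ∃ P : Polynomial ℝ, P.natDegree < n ∧
            ((Polynomial.derivative)^[j] P).eval x ≠ 0 ∧
            r = (1 / (((Polynomial.derivative)^[j] P).eval x)^2) *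
                ∫ t, (P.eval t * w t)^2}) :=
  christoffel_extremal_linear_functional_general w hint p hdeg horth n Φ hΦpos
end

section
/- Let a_n > 0 be an increasing sequence with a_n/n → 0, and fix constants C₂, C₆ > 1. Suppose w and T are functions on ℝ such that for all n and all t, x with |t|, |x| ≤ a_{2n} and |t−x| ≤ a_n/(n√(T(x))): T(t)/C₂ ≤ T(x) ≤ C₂ T(t) and w(t)/C₆ ≤ w(x) ≤ C₆ w(t). If additionally for some constants C₃, c₁ > 0 and a polynomial P of degree < n one has ‖(w/√T) P'‖_∞ ≤ C₃ (n/a_n) ‖wP‖_∞, and ζ ∈ ℝ satisfies ‖wP‖_∞ ≤ 2 |w(ζ) P(ζ)| with |ζ| ≤ a_n, then for all t with |t − ζ| ≤ c₁ (a_n/n)/√(T(ζ)), |t| ≤ a_{2n}, and 2 c₁ C C₆ C₃ ≤ 1/2 (for the appropriate comparison constant C between T(u) and T(ζ) on the segment), we have |P(t)| ≥ |P(ζ)|/2. -/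
open MeasureTheory Polynomial Filter

/-!
On the segment from `ζ` to `t`, the Bernstein-type inequality together with the comparability of
`w` and `√T` to their values at `ζ` bounds `|P'|` by `2 C₃ C C₆ (n / aₙ) √(T ζ) |P ζ|`. Since
`|t - ζ| ≤ c₁ (aₙ / n) / √(T ζ)`, the mean value theorem gives
`|P t - P ζ| ≤ 2 c₁ C C₆ C₃ |P ζ| ≤ |P ζ| / 2`.
-/

open Set
open scoped Interval

theorem half_abs_le_abs_of_abs_deriv_le {f f' : ℝ → ℝ} {x y K : ℝ}
    (hf : ∀ u ∈ [[x, y]], HasDerivAt f (f' u) u) (hbound : ∀ u ∈ [[x, y]], |f' u| ≤ K)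
    (hsmall : K * |y - x| ≤ |f x| / 2) : |f x| / 2 ≤ |f y| := by
  have hmvt : |f y - f x| ≤ K * |y - x| :=
    Convex.norm_image_sub_le_of_norm_hasDerivWithin_le (fun u hu => (hf u hu).hasDerivWithinAt)
      hbound (convex_uIcc x y) left_mem_uIcc right_mem_uIcc
  linarith [abs_sub_abs_le_abs_sub (f x) (f y), abs_sub_comm (f x) (f y)]

-- The derivative bound at a point `u` of the segment, with `d = |P' u|`, `p = |P ζ|`, `s = √T`.
theorem le_of_weighted_le_of_comparable {d p B M C C₆ wu wζ su sζ : ℝ} (hwu : 0 < wu)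
    (hsu : 0 < su) (hB : 0 ≤ B) (hC₆ : 0 ≤ C₆) (hp : 0 ≤ p)
    (hd : wu / su * d ≤ B * M) (hM : M ≤ 2 * (wζ * p)) (hw : wζ ≤ C₆ * wu)
    (hs : su ≤ C * sζ) : d ≤ 2 * B * C * C₆ * sζ * p := by
  have hBM : B * M ≤ 2 * B * C₆ * p * wu := by
    calc B * M ≤ B * (2 * (C₆ * wu * p)) := by gcongr; exact hM.trans (by gcongr)
      _ = 2 * B * C₆ * p * wu := by ring
  have hd' : d ≤ 2 * B * C₆ * p * su := by
    rw [div_mul_eq_mul_div, div_le_iff₀ hsu] at hd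
    nlinarith
  calc d ≤ 2 * B * C₆ * p * su := hd'
    _ ≤ 2 * B * C₆ * p * (C * sζ) := by gcongr
    _ = 2 * B * C * C₆ * sζ * p := by ring

theorem local_lower_bound_near_max_general
    (a : ℕ → ℝ) (ha_pos : ∀ n, 0 < a n) (ha_mono : Monotone a)
    (C₂ C₆ C₃ c₁ C : ℝ) (hC₆ : 1 < C₆) (hC₃ : 0 < C₃)
    (hc₁' : c₁ ≤ 1) (hC : 0 < C)
    (w T : ℝ → ℝ) (hw : ∀ x, 0 < w x) (hT : ∀ x, 1 ≤ T x)
    (n : ℕ) (hn : 1 ≤ n)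
    (hcomp : ∀ t x : ℝ, |t| ≤ a (2 * n) → |x| ≤ a (2 * n) →
      |t - x| ≤ a n / ((n : ℝ) * Real.sqrt (T x)) →
      T t / C₂ ≤ T x ∧ T x ≤ C₂ * T t ∧ w t / C₆ ≤ w x ∧ w x ≤ C₆ * w t)
    (P : Polynomial ℝ)
    (hBern : ∀ x : ℝ, (w x / Real.sqrt (T x)) * |(Polynomial.derivative P).eval x|
      ≤ C₃ * ((n : ℝ) / a n) * ⨆ y : ℝ, |w y * P.eval y|)
    (ζ : ℝ) (hζ : |ζ| ≤ a n)
    (hζmax : (⨆ y : ℝ, |w y * P.eval y|) ≤ 2 * |w ζ * P.eval ζ|)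
    (hCseg : ∀ u : ℝ, |u - ζ| ≤ c₁ * (a n / (n : ℝ)) / Real.sqrt (T ζ) →
      Real.sqrt (T u) ≤ C * Real.sqrt (T ζ))
    (hsmall : 2 * c₁ * C * C₆ * C₃ ≤ 1 / 2) :
    ∀ t : ℝ, |t - ζ| ≤ c₁ * (a n / (n : ℝ)) / Real.sqrt (T ζ) →
      |t| ≤ a (2 * n) →
      |P.eval ζ| / 2 ≤ |P.eval t| := by
  intro t ht ht2
  have hn₀ : (0 : ℝ) < n := by exact_mod_cast hn
  have han := ha_pos n
  have hsqrtT : ∀ x, 0 < √(T x) := fun x => Real.sqrt_pos.2 (one_pos.trans_le (hT x))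
  have hζ2 : |ζ| ≤ a (2 * n) := hζ.trans (ha_mono (by omega))
  have hradius : c₁ * (a n / n) / √(T ζ) ≤ a n / (n * √(T ζ)) := by
    rw [← div_div]
    gcongr
    exact mul_le_of_le_one_left (by positivity) hc₁'
  set K := 2 * (C₃ * (n / a n)) * C * C₆ * √(T ζ) * |P.eval ζ|
  have hderiv : ∀ u ∈ [[ζ, t]], |(derivative P).eval u| ≤ K := by
    intro u hu
    have huζ := (abs_sub_left_of_mem_uIcc hu).trans ht
    have hu2 : |u| ≤ a (2 * n) := abs_le.2 (uIcc_subset_Icc (abs_le.1 hζ2) (abs_le.1 ht2) hu)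
    obtain ⟨-, -, -, hwζ⟩ := hcomp u ζ hu2 hζ2 (huζ.trans hradius)
    refine le_of_weighted_le_of_comparable (hw u) (hsqrtT u) (by positivity) (by linarith)
      (abs_nonneg _) (hBern u) ?_ hwζ (hCseg u huζ)
    simpa only [abs_mul, abs_of_pos (hw ζ)] using hζmax
  refine half_abs_le_abs_of_abs_deriv_le (fun u _ => P.hasDerivAt u) hderiv ?_
  calc K * |t - ζ| ≤ K * (c₁ * (a n / n) / √(T ζ)) := by gcongr
    _ = 2 * c₁ * C * C₆ * C₃ * |P.eval ζ| := by
      simp only [K]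
      field_simp [(hsqrtT ζ).ne', han.ne', hn₀.ne']
    _ ≤ |P.eval ζ| / 2 := by nlinarith [abs_nonneg (P.eval ζ)]

/-- the local lower bound (3.12): |P(t)| ≥ |P(ζ)|/2 on a small
interval around a near-maximum point ζ. -/
theorem local_lower_bound_near_max
    (a : ℕ → ℝ) (ha_pos : ∀ n, 0 < a n) (ha_mono : Monotone a)
    (ha_lim : Tendsto (fun n => a n / (n : ℝ)) atTop (nhds 0))
    (C₂ C₆ C₃ c₁ C : ℝ) (hC₂ : 1 < C₂) (hC₆ : 1 < C₆) (hC₃ : 0 < C₃)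
    (hc₁ : 0 < c₁) (hc₁' : c₁ ≤ 1) (hC : 0 < C)
    (w T : ℝ → ℝ) (hw : ∀ x, 0 < w x) (hT : ∀ x, 1 ≤ T x)
    (n : ℕ) (hn : 1 ≤ n)
    (hcomp : ∀ t x : ℝ, |t| ≤ a (2 * n) → |x| ≤ a (2 * n) →
      |t - x| ≤ a n / ((n : ℝ) * Real.sqrt (T x)) →
      T t / C₂ ≤ T x ∧ T x ≤ C₂ * T t ∧ w t / C₆ ≤ w x ∧ w x ≤ C₆ * w t)
    (P : Polynomial ℝ) (hP : P.natDegree < n)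
    (hBern : ∀ x : ℝ, (w x / Real.sqrt (T x)) * |(Polynomial.derivative P).eval x|
      ≤ C₃ * ((n : ℝ) / a n) * ⨆ y : ℝ, |w y * P.eval y|)
    (ζ : ℝ) (hζ : |ζ| ≤ a n)
    (hζmax : (⨆ y : ℝ, |w y * P.eval y|) ≤ 2 * |w ζ * P.eval ζ|)
    (hCseg : ∀ u : ℝ, |u - ζ| ≤ c₁ * (a n / (n : ℝ)) / Real.sqrt (T ζ) →
      Real.sqrt (T u) ≤ C * Real.sqrt (T ζ))
    (hsmall : 2 * c₁ * C * C₆ * C₃ ≤ 1 / 2) :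
    ∀ t : ℝ, |t - ζ| ≤ c₁ * (a n / (n : ℝ)) / Real.sqrt (T ζ) →
      |t| ≤ a (2 * n) →
      |P.eval ζ| / 2 ≤ |P.eval t| :=
  local_lower_bound_near_max_general a ha_pos ha_mono C₂ C₆ C₃ c₁ C hC₆ hC₃ hc₁' hC w T hw hT n hn
    hcomp P hBern ζ hζ hζmax hCseg hsmall
end
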